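/- arXiv:1703.02930 — 3 statements merged into one kernel-verified Lean document; each statement's English description precedes it below -/
import Mathlib

section
/- Suppose a feedforward neural network with W parameters and L layers, a single real input and a single real output, whose computation units have continuous piecewise polynomial activation functions each with at most p ≥ 1 pieces and degree at most d ≥ 1, computes a function f : ℝ → ℝ with the property that |f(x) − (x mod 2)| < 1/2 for every integer x ∈ {0, 1, …, 2^m − 1}. Then m ≤ L·log₂(13·p·d^{(L+1)/2}·W/L). -/
/-- A feedforward neural network architecture together with its activation
functions.  The nodes are `Fin numNodes`, listed in topological order: every
edge goes from a node of smaller index to a node of strictly larger index.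
Nodes `0, …, numInputs − 1` are the input nodes (in-degree 0); all remaining
nodes are computation units; the last node is the (single) output unit. -/
structure NNArch where
  numNodes : ℕ
  numInputs : ℕ
  hIn : numInputs < numNodes
  edges : Finset (Fin numNodes × Fin numNodes)
  hTopo : ∀ e ∈ edges, e.1 < e.2
  hTarget : ∀ e ∈ edges, numInputs ≤ (e.2 : ℕ)
  act : Fin numNodes → ℝ → ℝ

namespace NNArch

/-- The output node: the last node in the topological order. -/
def outNode (N : NNArch) : Fin N.numNodes := ⟨N.numNodes - 1, by have := N.hIn; omega⟩

/-- The number `U` of computation units. -/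
def numUnits (N : NNArch) : ℕ := N.numNodes - N.numInputs

/-- The number `W` of parameters: one weight per edge and one bias per
computation unit. -/
def numParams (N : NNArch) : ℕ := N.edges.card + N.numUnits

/-- The edges entering node `v`. -/
def incoming (N : NNArch) (v : Fin N.numNodes) :
    Finset (Fin N.numNodes × Fin N.numNodes) :=
  N.edges.filter fun e => e.2 = v

/-- The output of node `v`, given edge weights `w`, biases `b` and network
input `x`.  An input node outputs the corresponding coordinate of `x`; a
computation unit applies its activation function to `wᵀz + b`, except the
output unit, which outputs `wᵀz + b` unchanged. -/
noncomputable def value (N : NNArch) (w : Fin N.numNodes × Fin N.numNodes → ℝ)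
    (b : Fin N.numNodes → ℝ) (x : Fin N.numInputs → ℝ) (v : Fin N.numNodes) : ℝ :=
  if hv : (v : ℕ) < N.numInputs then x ⟨v, hv⟩
  else
    let s := (∑ e ∈ (N.incoming v).attach, w e.1 * N.value w b x e.1.1) + b v
    if (v : ℕ) = N.numNodes - 1 then s else N.act v s
termination_by (v : ℕ)
decreasing_by
  have he := Finset.mem_filter.mp e.2
  have h1 := N.hTopo e.1 he.1
  have h2 : e.1.2 = v := he.2
  rw [Fin.lt_def] at h1
  omega

/-- The real-valued function computed by the network for a given setting of
the parameters. -/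
noncomputable def eval (N : NNArch) (w : Fin N.numNodes × Fin N.numNodes → ℝ)
    (b : Fin N.numNodes → ℝ) (x : Fin N.numInputs → ℝ) : ℝ :=
  N.value w b x N.outNode

/-- The class of functions computed by the architecture as its parameters
range over all real values. -/
def funClass (N : NNArch) : Set ((Fin N.numInputs → ℝ) → ℝ) :=
  { f | ∃ w b, f = N.eval w b }

/-- The layer of a node: `0` for nodes with no predecessors, and otherwise one
more than the maximal layer of a predecessor. -/
noncomputable def layer (N : NNArch) (v : Fin N.numNodes) : ℕ :=
  (N.incoming v).attach.sup fun e => N.layer e.1.1 + 1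
termination_by (v : ℕ)
decreasing_by
  have he := Finset.mem_filter.mp e.2
  have h1 := N.hTopo e.1 he.1
  have h2 : e.1.2 = v := he.2
  rw [Fin.lt_def] at h1
  omega

/-- The number `L` of layers: the layer of the output node. -/
noncomputable def depth (N : NNArch) : ℕ := N.layer N.outNode

/-- A ReLU network: every activation function is `x ↦ max 0 x`. -/
def IsReLU (N : NNArch) : Prop := ∀ v, N.act v = fun z => max 0 z

end NNArch

/-- A finite set `S` is shattered by `sgn(F)` if every binary pattern on `S`
is realized by the sign of some `f ∈ F`. -/
def Shatters {X : Type*} (F : Set (X → ℝ)) (S : Finset X) : Prop :=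
  ∀ c : X → Bool, ∃ f ∈ F, ∀ x ∈ S, (0 < f x ↔ c x = true)

/-- The index of the piece (among the `B + 1` intervals determined by the
breakpoints `t`) containing the point `x`. -/
noncomputable def pieceIndex {B : ℕ} (t : Fin B → ℝ) (x : ℝ) : Fin (B + 1) :=
  ⟨(Finset.univ.filter fun i => t i ≤ x).card, by
    have h : (Finset.univ.filter fun i => t i ≤ x).card ≤ B := by
      simpa using Finset.card_filter_le (Finset.univ : Finset (Fin B)) _
    omega⟩

/-- `f` is piecewise polynomial with at most `p` pieces, each of degree at
most `d`: there are `B` breakpoints (`B + 1 ≤ p`) listed in nondecreasing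
order, partitioning `ℝ` into at most `p` intervals, and on each resulting
interval `f` agrees with a polynomial of degree at most `d`. -/
def PiecewisePoly (f : ℝ → ℝ) (p d : ℕ) : Prop :=
  ∃ (B : ℕ) (t : Fin B → ℝ) (q : Fin (B + 1) → Polynomial ℝ),
    B + 1 ≤ p ∧ Monotone t ∧ (∀ i, (q i).natDegree ≤ d) ∧
    ∀ x : ℝ, f x = (q (pieceIndex t x)).eval x

/-!
By induction on the layers, all nodes of layer at most `ℓ` are continuous and piecewise
polynomial of degree `d ^ ℓ` with a common finite set `S_ℓ` of breakpoints. A unit of layer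
`ℓ + 1` applies an activation with at most `p - 1` breakpoints to a function that is a
polynomial of degree `d ^ ℓ` on each piece of `S_ℓ`. New breakpoints arise only where that
polynomial hits a breakpoint of the activation, so, with `n_j` units in layer `j`,
`#S_{ℓ+1} + 1 ≤ (#S_ℓ + 1) (1 + n_{ℓ+1} (p - 1) d ^ ℓ)`. Continuity makes the composite
agree with one polynomial on each whole refined piece, including its left end.

The output is then a polynomial of degree `d ^ (L - 1)` on each piece of `S_{L-1}`. As `f - 1/2`
changes sign between consecutive integers below `2 ^ m`, a piece contains at most
`d ^ (L - 1) + 1` of them, so `2 ^ m ≤ (#S_{L-1} + 1) (d ^ (L - 1) + 1)`. Since the `n_j` sum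
to at most `W`, AM-GM turns this into the stated bound.
-/

open Finset Polynomial Filter Topology

/-- A finite set `S` of breakpoints cuts `ℝ` into the half-open pieces `[s, s')` and the two
unbounded ends; `pieceIdx S x` numbers the piece containing `x`. -/
noncomputable def pieceIdx (S : Finset ℝ) (x : ℝ) : ℕ := #{s ∈ S | s ≤ x}

section pieceIdx

variable {S : Finset ℝ} {x y : ℝ}

lemma pieceIdx_le_card (S : Finset ℝ) (x : ℝ) : pieceIdx S x ≤ #S := card_filter_le _ _

lemma pieceIdx_mono (S : Finset ℝ) : Monotone (pieceIdx S) := fun _ _ hxy =>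
  card_le_card (monotone_filter_right S fun _ _ h => h.trans hxy)

lemma pieceIdx_eq_iff : pieceIdx S x = pieceIdx S y ↔ ∀ s ∈ S, (s ≤ x ↔ s ≤ y) := by
  refine ⟨fun h => ?_, fun h => congrArg card (filter_congr h)⟩
  wlog hxy : x ≤ y generalizing x y
  · exact fun s hs => (this h.symm (le_of_not_ge hxy) s hs).symm
  have heq : {s ∈ S | s ≤ x} = {s ∈ S | s ≤ y} :=
    eq_of_subset_of_card_le (monotone_filter_right S fun _ _ h => h.trans hxy) h.ge
  intro s hs
  simpa [hs] using congrArg (s ∈ ·) heq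

lemma pieceIdx_eq_of_subset {S' : Finset ℝ} (hS : S ⊆ S')
    (h : pieceIdx S' x = pieceIdx S' y) : pieceIdx S x = pieceIdx S y :=
  pieceIdx_eq_iff.2 fun s hs => pieceIdx_eq_iff.1 h s (hS hs)

lemma pieceIdx_eq_of_mem_uIcc {z : ℝ} (h : pieceIdx S x = pieceIdx S y)
    (hz : z ∈ Set.uIcc x y) :
    pieceIdx S z = pieceIdx S x := by
  wlog hxy : x ≤ y generalizing x y
  · rw [Set.uIcc_comm] at hz
    rw [this h.symm hz (le_of_not_ge hxy), h]
  rw [Set.uIcc_of_le hxy] at hz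
  exact le_antisymm (h ▸ pieceIdx_mono S hz.2) (pieceIdx_mono S hz.1)

lemma le_of_mem_of_pieceIdx_eq {s : ℝ} (hs : s ∈ S) (h : pieceIdx S s = pieceIdx S y) :
    s ≤ y :=
  (pieceIdx_eq_iff.1 h s hs).1 le_rfl

lemma eventually_pieceIdx_eq_and_notMem (S : Finset ℝ) (x : ℝ) :
    ∀ᶠ z in 𝓝[>] x, pieceIdx S z = pieceIdx S x ∧ z ∉ S := by
  have hS : ∀ s ∈ S, ∀ᶠ z in 𝓝[>] x, (s ≤ z ↔ s ≤ x) ∧ z ≠ s := fun s _ => by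
    rcases le_or_gt s x with hsx | hxs
    · filter_upwards [self_mem_nhdsWithin] with z (hz : x < z)
      exact ⟨iff_of_true (hsx.trans hz.le) hsx, (hsx.trans_lt hz).ne'⟩
    · filter_upwards [Ioo_mem_nhdsGT hxs] with z hz
      exact ⟨iff_of_false hz.2.not_ge hxs.not_ge, hz.2.ne⟩
  filter_upwards [(eventually_all_finset S).2 hS] with z hz
  exact ⟨pieceIdx_eq_iff.2 fun s hs => (hz s hs).1, fun hzS => (hz z hzS).2 rfl⟩

/-- Every point of a piece is a limit from the right of non-breakpoints of the same piece. -/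
lemma eq_on_piece_of_eq_off_breakpoints {f g : ℝ → ℝ} (hf : Continuous f) (hg : Continuous g)
    (h : ∀ z, pieceIdx S z = pieceIdx S x → z ∉ S → f z = g z)
    (hy : pieceIdx S y = pieceIdx S x) : f y = g y := by
  have hfg : f =ᶠ[𝓝[>] y] g := by
    filter_upwards [eventually_pieceIdx_eq_and_notMem S y] with z hz
    exact h z (hz.1.trans hy) hz.2
  exact tendsto_nhds_unique ((hf.tendsto y).mono_left nhdsWithin_le_nhds |>.congr' hfg)
    ((hg.tendsto y).mono_left nhdsWithin_le_nhds)

end pieceIdx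

def IsPiecewisePoly (S : Finset ℝ) (D : ℕ) (f : ℝ → ℝ) : Prop :=
  ∀ x, ∃ P : ℝ[X], P.natDegree ≤ D ∧ ∀ y, pieceIdx S y = pieceIdx S x → f y = P.eval y

namespace IsPiecewisePoly

variable {S : Finset ℝ} {D : ℕ} {f g : ℝ → ℝ}

lemma const (S : Finset ℝ) (D : ℕ) (c : ℝ) : IsPiecewisePoly S D fun _ => c :=
  fun _ => ⟨C c, by simp, fun _ _ => by simp⟩

lemma id (S : Finset ℝ) : IsPiecewisePoly S 1 fun x => x :=
  fun _ => ⟨X, natDegree_X_le, fun _ _ => by simp⟩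

lemma mono {S' : Finset ℝ} {D' : ℕ} (hf : IsPiecewisePoly S D f) (hS : S ⊆ S')
    (hD : D ≤ D') :
    IsPiecewisePoly S' D' f := fun x => by
  obtain ⟨P, hP, hfP⟩ := hf x
  exact ⟨P, hP.trans hD, fun y hy => hfP y (pieceIdx_eq_of_subset hS hy)⟩

lemma add (hf : IsPiecewisePoly S D f) (hg : IsPiecewisePoly S D g) :
    IsPiecewisePoly S D fun x => f x + g x := fun x => by
  obtain ⟨P, hP, hfP⟩ := hf x
  obtain ⟨Q, hQ, hgQ⟩ := hg x
  exact ⟨P + Q, (natDegree_add_le _ _).trans (max_le hP hQ),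
    fun y hy => by simp only [eval_add, hfP y hy, hgQ y hy]⟩

lemma const_mul (c : ℝ) (hf : IsPiecewisePoly S D f) :
    IsPiecewisePoly S D fun x => c * f x := fun x => by
  obtain ⟨P, hP, hfP⟩ := hf x
  exact ⟨C c * P, natDegree_C_mul_le _ _ |>.trans hP,
    fun y hy => by simp only [eval_mul, eval_C, hfP y hy]⟩

lemma sum {ι : Type*} (A : Finset ι) {g : ι → ℝ → ℝ}
    (hg : ∀ i ∈ A, IsPiecewisePoly S D (g i)) :
    IsPiecewisePoly S D fun x => ∑ i ∈ A, g i x := by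
  classical
  induction A using Finset.induction_on with
  | empty => simpa using const S D 0
  | insert a A ha ih =>
    simp_rw [sum_insert ha]
    exact (hg a (mem_insert_self a A)).add (ih fun i hi => hg i (mem_insert_of_mem hi))

lemma exists_polys (hf : IsPiecewisePoly S D f) :
    ∃ q : ℕ → ℝ[X], (∀ k, (q k).natDegree ≤ D) ∧
      ∀ x, f x = (q (pieceIdx S x)).eval x := by
  classical
  choose P hP hfP using hf
  refine ⟨fun k => if hk : ∃ x, pieceIdx S x = k then P hk.choose else 0,
    fun k => ?_, fun x => ?_⟩
  · dsimp only
    split_ifs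
    · exact hP _
    · simp
  · have hk : ∃ y, pieceIdx S y = pieceIdx S x := ⟨x, rfl⟩
    dsimp only
    rw [dif_pos hk]
    exact hfP _ x hk.choose_spec.symm

end IsPiecewisePoly

lemma PiecewisePoly.exists_isPiecewisePoly {f : ℝ → ℝ} {p d : ℕ}
    (hf : PiecewisePoly f p d) :
    ∃ T : Finset ℝ, #T + 1 ≤ p ∧ IsPiecewisePoly T d f := by
  classical
  obtain ⟨B, t, q, hBp, -, hq, hfq⟩ := hf
  refine ⟨univ.image t, (Nat.add_le_add_right (card_image_le.trans (by simp)) 1).trans hBp,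
    fun x => ⟨q (pieceIndex t x), hq _, fun y hy => ?_⟩⟩
  have hyx : ∀ i, t i ≤ y ↔ t i ≤ x := fun i =>
    pieceIdx_eq_iff.1 hy (t i) (mem_image_of_mem t (mem_univ i))
  rw [hfq y, show pieceIndex t y = pieceIndex t x by simp only [pieceIndex, hyx]]

/-- A crossing of `τ ∈ T` between `y` and `z` would give, by the intermediate value theorem, a
point of `S` in their piece strictly to the right of `min y z`; but a breakpoint in a piece is
its left end. -/
lemma pieceIdx_eval_eq_of_roots_subset {S T : Finset ℝ} {P : ℝ[X]} {x y z : ℝ}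
    (hroots : ∀ τ ∈ T, (P - C τ).roots.toFinset ⊆ S) (hy : pieceIdx S y = pieceIdx S x)
    (hz : pieceIdx S z = pieceIdx S x) (hyS : y ∉ S) (hzS : z ∉ S) :
    pieceIdx T (P.eval y) = pieceIdx T (P.eval z) := by
  wlog hyz : P.eval y ≤ P.eval z generalizing y z
  · exact (this hz hy hzS hyS (le_of_not_ge hyz)).symm
  refine pieceIdx_eq_iff.2 fun τ hτ =>
    ⟨fun h => h.trans hyz, fun hτz => le_of_not_gt fun hyτ => ?_⟩
  obtain ⟨u, hu, hPu⟩ : τ ∈ P.eval '' Set.uIcc y z :=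
    intermediate_value_uIcc P.continuous.continuousOn (by
      rw [Set.uIcc_of_le hyz]; exact ⟨hyτ.le, hτz⟩)
  have hPτ : P - C τ ≠ 0 := fun h0 =>
    hyτ.ne (by simpa [sub_eq_zero] using congrArg (eval y) h0)
  have huS : u ∈ S := hroots τ hτ (by simp [mem_roots hPτ, hPu])
  have hu_piece := pieceIdx_eq_of_mem_uIcc (hy.trans hz.symm) hu
  have hu_le : ∀ w, pieceIdx S w = pieceIdx S x → u ≤ w := fun w hw =>
    le_of_mem_of_pieceIdx_eq huS (hu_piece.trans (hy.trans hw.symm))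
  have hu_min : u = min y z := le_antisymm (le_min (hu_le y hy) (hu_le z hz)) hu.1
  rcases min_choice y z with h | h
  · exact hyS (h ▸ hu_min ▸ huS)
  · exact hzS (h ▸ hu_min ▸ huS)

/-- The new breakpoints `R` are the points where the polynomial giving `g` on a piece of `S`
hits a breakpoint of `ψ`. -/
theorem IsPiecewisePoly.comp {S T : Finset ℝ} {D e : ℕ} {ψ g : ℝ → ℝ}
    (hψ : Continuous ψ) (hψT : IsPiecewisePoly T e ψ)
    (hg : Continuous g) (hgS : IsPiecewisePoly S D g) :
    ∃ R : Finset ℝ, #R ≤ (#S + 1) * #T * D ∧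
      IsPiecewisePoly (S ∪ R) (e * D) (ψ ∘ g) := by
  classical
  obtain ⟨q, hqD, hgq⟩ := hgS.exists_polys
  set R := (range (#S + 1) ×ˢ T).biUnion fun kτ => (q kτ.1 - C kτ.2).roots.toFinset
  refine ⟨R, ?_, fun x => ?_⟩
  · calc #R ≤ ∑ kτ ∈ range (#S + 1) ×ˢ T, #(q kτ.1 - C kτ.2).roots.toFinset :=
          card_biUnion_le
      _ ≤ ∑ _kτ ∈ range (#S + 1) ×ˢ T, D := sum_le_sum fun kτ _ =>
          (Multiset.toFinset_card_le _).trans <| (card_roots' _).trans <|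
            natDegree_sub_C.trans_le (hqD _)
      _ = (#S + 1) * #T * D := by simp
  set S' := S ∪ R
  obtain ⟨x₀, hx₀, hx₀S⟩ := (eventually_pieceIdx_eq_and_notMem S' x).exists
  set P := q (pieceIdx S x₀)
  have hgP : ∀ y, pieceIdx S' y = pieceIdx S' x₀ → g y = P.eval y := fun y hy => by
    rw [hgq y, pieceIdx_eq_of_subset subset_union_left hy]
  have hroots : ∀ τ ∈ T, (P - C τ).roots.toFinset ⊆ S' := fun τ hτ u hu =>
    mem_union_right S <| mem_biUnion.2 ⟨(pieceIdx S x₀, τ),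
      mem_product.2 ⟨mem_range.2 (Nat.lt_succ_of_le (pieceIdx_le_card S x₀)), hτ⟩, hu⟩
  obtain ⟨Q, hQe, hψQ⟩ := hψT (g x₀)
  refine ⟨Q.comp P, natDegree_comp_le.trans (Nat.mul_le_mul hQe (hqD _)), fun y hy => ?_⟩
  refine eq_on_piece_of_eq_off_breakpoints (hψ.comp hg) (Q.comp P).continuous
    (fun z hz hzS => ?_) (hy.trans hx₀.symm)
  have hT : pieceIdx T (P.eval z) = pieceIdx T (g x₀) :=
    hgP x₀ rfl ▸ pieceIdx_eval_eq_of_roots_subset hroots hz rfl hzS hx₀S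
  rw [Function.comp_apply, eval_comp, hgP z hz, hψQ _ hT]

lemma exists_mem_Ioo_eq_of_mul_neg {f : ℝ → ℝ} {a b c : ℝ} (hab : a ≤ b)
    (hf : ContinuousOn f (Set.Icc a b)) (h : (f a - c) * (f b - c) < 0) :
    ∃ r ∈ Set.Ioo a b, f r = c := by
  rcases mul_neg_iff.1 h with ⟨ha, hb⟩ | ⟨ha, hb⟩
  · exact intermediate_value_Ioo' hab hf ⟨by linarith, by linarith⟩
  · exact intermediate_value_Ioo hab hf ⟨by linarith, by linarith⟩

/-- Between consecutive integers of one piece `f - c` has a root, and on that piece `f - c` is a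
nonzero polynomial of degree at most `D`. -/
lemma card_filter_pieceIdx_eq_le_of_alternating {f : ℝ → ℝ} {S : Finset ℝ} {D n : ℕ}
    {c : ℝ} (hf : Continuous f) (hfS : IsPiecewisePoly S D f)
    (halt : ∀ i : ℕ, i + 1 < n → (f i - c) * (f (i + 1) - c) < 0) (k : ℕ) :
    #((range n).filter fun i : ℕ => pieceIdx S i = k) ≤ D + 1 := by
  have hroot : ∀ i : ℕ, i + 1 < n → ∃ r ∈ Set.Ioo (i : ℝ) (i + 1), f r = c :=
    fun i hi =>
      exists_mem_Ioo_eq_of_mul_neg (by linarith) hf.continuousOn (by exact_mod_cast halt i hi)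
  choose! r hr hfr using hroot
  set E := (range n).filter fun i : ℕ => pieceIdx S i = k
  rcases E.eq_empty_or_nonempty with hE | hE
  · rw [hE, card_empty]; omega
  set M := E.max' hE
  have hME : M ∈ E := E.max'_mem hE
  have hM := mem_filter.1 hME
  obtain ⟨P, hPD, hfP⟩ := hfS M
  have hfP' : ∀ y, pieceIdx S y = k → f y = P.eval y := fun y hy => hfP y (hy.trans hM.2.symm)
  have hnext : ∀ i ∈ E.erase M, i + 1 < n ∧ pieceIdx S (r i) = k := by
    intro i hi
    obtain ⟨hne, hiE⟩ := mem_erase.1 hi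
    have hlt : i < M := lt_of_le_of_ne (E.le_max' i hiE) hne
    have hi' := (mem_filter.1 hiE).2
    have hi1 : i + 1 < n := by have := mem_range.1 hM.1; omega
    refine ⟨hi1, hi' ▸ pieceIdx_eq_of_mem_uIcc (hi'.trans hM.2.symm) ?_⟩
    rw [Set.uIcc_of_le (by exact_mod_cast hlt.le)]
    have : (i : ℝ) + 1 ≤ M := by exact_mod_cast hlt
    exact ⟨(hr i hi1).1.le, (hr i hi1).2.le.trans this⟩
  have hcard : #(E.erase M) ≤ D := by
    rcases (E.erase M).eq_empty_or_nonempty with h0 | ⟨i₀, hi₀⟩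
    · simp [h0]
    have hPc : P - C c ≠ 0 := fun h0 => by
      have hfi₀ := hfP' i₀ (mem_filter.1 (mem_of_mem_erase hi₀)).2
      have := congrArg (eval (i₀ : ℝ)) h0
      simp only [eval_sub, eval_C, eval_zero, sub_eq_zero] at this
      rcases mul_neg_iff.1 (halt i₀ (hnext i₀ hi₀).1) with ⟨h1, -⟩ | ⟨h1, -⟩ <;>
        linarith
    have hinj : Set.InjOn r (E.erase M) := by
      refine StrictMonoOn.injOn fun i hi j hj hij => ?_
      have : (i : ℝ) + 1 ≤ j := by exact_mod_cast hij
      linarith [(hr i (hnext i hi).1).2, (hr j (hnext j hj).1).1]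
    rw [← card_image_of_injOn hinj]
    refine (card_le_degree_of_subset_roots fun y hy => ?_).trans
      ((natDegree_sub_C (a := c)).trans_le hPD)
    obtain ⟨i, hi, rfl⟩ := mem_image.1 (mem_def.2 hy)
    rw [mem_roots hPc, IsRoot, eval_sub, eval_C, ← hfP' _ (hnext i hi).2,
      hfr i (hnext i hi).1, sub_self]
  have := card_erase_of_mem hME
  omega

theorem le_of_isPiecewisePoly_of_alternating {f : ℝ → ℝ} {S : Finset ℝ} {D n : ℕ}
    {c : ℝ} (hf : Continuous f) (hfS : IsPiecewisePoly S D f)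
    (halt : ∀ i : ℕ, i + 1 < n → (f i - c) * (f (i + 1) - c) < 0) :
    n ≤ (#S + 1) * (D + 1) :=
  calc n = #(range n) := (card_range n).symm
    _ ≤ (D + 1) * #(range (#S + 1)) := card_le_mul_card_image_of_maps_to
        (f := fun i : ℕ => pieceIdx S i)
        (fun i _ => mem_range.2 (Nat.lt_succ_of_le (pieceIdx_le_card S i))) _
        fun k _ => card_filter_pieceIdx_eq_le_of_alternating hf hfS halt k
    _ = (#S + 1) * (D + 1) := by rw [card_range, mul_comm]

namespace NNArch

variable (N : NNArch)

lemma layer_eq_sup (v : Fin N.numNodes) :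
    N.layer v = (N.incoming v).attach.sup fun e => N.layer e.1.1 + 1 := by
  rw [layer]

section

variable {N} {v : Fin N.numNodes} {e : Fin N.numNodes × Fin N.numNodes}

lemma lt_of_mem_incoming (he : e ∈ N.incoming v) : e.1 < v := by
  obtain ⟨hE, rfl⟩ := mem_filter.1 he
  exact N.hTopo e hE

lemma val_fst_ne_of_mem_incoming (he : e ∈ N.incoming v) : (e.1 : ℕ) ≠ N.numNodes - 1 := by
  have := lt_of_mem_incoming he
  have := v.2
  omega

lemma layer_lt_of_mem_incoming (he : e ∈ N.incoming v) : N.layer e.1 < N.layer v := by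
  have := le_sup (f := fun e : N.incoming v => N.layer e.1.1 + 1) (mem_attach _ ⟨e, he⟩)
  rw [← layer_eq_sup] at this
  exact this

lemma incoming_eq_empty_of_layer_eq_zero (h : N.layer v = 0) : N.incoming v = ∅ :=
  eq_empty_of_forall_notMem fun _ he => by have := layer_lt_of_mem_incoming he; omega

lemma layer_eq_zero_of_lt_numInputs (hv : (v : ℕ) < N.numInputs) : N.layer v = 0 := by
  have : N.incoming v = ∅ := eq_empty_of_forall_notMem fun e he => by
    obtain ⟨hE, rfl⟩ := mem_filter.1 he
    have := N.hTarget e hE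
    omega
  rw [layer_eq_sup, this]
  rfl

lemma exists_mem_incoming_layer_eq {k : ℕ} (h : N.layer v = k + 1) :
    ∃ e ∈ N.incoming v, N.layer e.1 = k := by
  have hne : (N.incoming v).attach.Nonempty := by
    rw [attach_nonempty_iff, nonempty_iff_ne_empty]
    rintro h0
    rw [layer_eq_sup, h0] at h
    simp at h
  obtain ⟨e, -, he⟩ := exists_mem_eq_sup _ hne fun e => N.layer e.1.1 + 1
  rw [← layer_eq_sup] at he
  exact ⟨e.1, e.2, by omega⟩

lemma exists_layer_eq {j : ℕ} (hj : j ≤ N.layer v) : ∃ u, N.layer u = j := by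
  suffices ∀ k (u : Fin N.numNodes), N.layer u = k → ∀ j ≤ k, ∃ u, N.layer u = j from
    this _ v rfl j hj
  intro k
  induction k with
  | zero => exact fun u hu j hj => ⟨u, by omega⟩
  | succ k ih =>
    intro u hu j hj
    rcases hj.lt_or_eq with hj | rfl
    · obtain ⟨e, -, he⟩ := exists_mem_incoming_layer_eq hu
      exact ih e.1 he j (by omega)
    · exact ⟨u, hu⟩

end

noncomputable def layerNodes (j : ℕ) : Finset (Fin N.numNodes) := {v | N.layer v = j}

lemma layerNodes_nonempty {j : ℕ} (hj : j ≤ N.depth) : (N.layerNodes j).Nonempty := by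
  obtain ⟨u, hu⟩ := exists_layer_eq (v := N.outNode) hj
  exact ⟨u, mem_filter.2 ⟨mem_univ u, hu⟩⟩

lemma numUnits_le_numParams : N.numUnits ≤ N.numParams := Nat.le_add_left _ _

lemma card_units : #{v : Fin N.numNodes | N.numInputs ≤ (v : ℕ)} = N.numUnits := by
  have : ({v : Fin N.numNodes | N.numInputs ≤ (v : ℕ)} : Finset _) =
      Ici ⟨N.numInputs, N.hIn⟩ := by
    ext v
    simp [Fin.le_def]
  rw [this, Fin.card_Ici]
  rfl

lemma sum_card_layerNodes_le_numUnits (k : ℕ) :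
    ∑ j ∈ range k, #(N.layerNodes (j + 1)) ≤ N.numUnits := by
  classical
  have hdisj : ((range k : Finset ℕ) : Set ℕ).PairwiseDisjoint fun j => N.layerNodes (j + 1) :=
    fun i _ j _ hij => disjoint_filter.2 fun v _ h1 h2 => hij (by omega)
  rw [← card_biUnion hdisj, ← card_units]
  refine card_le_card fun v hv => ?_
  obtain ⟨j, -, hj⟩ := mem_biUnion.1 hv
  have hj := (mem_filter.1 hj).2
  refine mem_filter.2 ⟨mem_univ v, not_lt.1 fun hv => ?_⟩
  have := layer_eq_zero_of_lt_numInputs hv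
  omega

lemma depth_le_numUnits : N.depth ≤ N.numUnits :=
  calc N.depth = ∑ j ∈ range N.depth, 1 := by simp
    _ ≤ ∑ j ∈ range N.depth, #(N.layerNodes (j + 1)) := sum_le_sum fun j hj =>
        card_pos.2 (N.layerNodes_nonempty (by simp at hj; omega))
    _ ≤ N.numUnits := N.sum_card_layerNodes_le_numUnits _

section

variable (w : Fin N.numNodes × Fin N.numNodes → ℝ) (b : Fin N.numNodes → ℝ)

noncomputable def nodeFun (v : Fin N.numNodes) (x : ℝ) : ℝ := N.value w b (fun _ => x) v

noncomputable def netInputFun (v : Fin N.numNodes) (x : ℝ) : ℝ :=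
  ∑ e ∈ N.incoming v, w e * N.nodeFun w b e.1 x + b v

variable {N w b} {v : Fin N.numNodes}

lemma nodeFun_of_lt_numInputs (hv : (v : ℕ) < N.numInputs) : N.nodeFun w b v = fun x => x := by
  funext x
  rw [nodeFun, value, dif_pos hv]

lemma nodeFun_of_numInputs_le (hv : N.numInputs ≤ (v : ℕ)) :
    N.nodeFun w b v =
      if (v : ℕ) = N.numNodes - 1 then N.netInputFun w b v
      else N.act v ∘ N.netInputFun w b v := by
  funext x
  rw [nodeFun, value, dif_neg (by omega), sum_attach (N.incoming v)
    fun e => w e * N.value w b (fun _ => x) e.1]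
  split_ifs <;> rfl

lemma nodeFun_outNode : N.nodeFun w b N.outNode = N.netInputFun w b N.outNode := by
  rw [nodeFun_of_numInputs_le (by have := N.hIn; simp [outNode]; omega),
    if_pos (show (N.outNode : ℕ) = N.numNodes - 1 from rfl)]

lemma netInputFun_of_layer_eq_zero (h : N.layer v = 0) : N.netInputFun w b v = fun _ => b v := by
  funext x
  rw [netInputFun, incoming_eq_empty_of_layer_eq_zero h, sum_empty, zero_add]

lemma continuous_netInputFun_and_isPiecewisePoly {S : Finset ℝ} {D : ℕ}
    (h : ∀ e ∈ N.incoming v,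
      Continuous (N.nodeFun w b e.1) ∧ IsPiecewisePoly S D (N.nodeFun w b e.1)) :
    Continuous (N.netInputFun w b v) ∧ IsPiecewisePoly S D (N.netInputFun w b v) :=
  ⟨(continuous_finsetSum _ fun e he => continuous_const.mul (h e he).1).add continuous_const,
    (IsPiecewisePoly.sum _ fun e he => (h e he).2.const_mul (w e)).add (.const S D (b v))⟩

lemma exists_isPiecewisePoly_nodeFun_of_incoming {S T : Finset ℝ} {D e : ℕ}
    (hv : N.numInputs ≤ (v : ℕ)) (hvl : (v : ℕ) ≠ N.numNodes - 1)
    (hψ : Continuous (N.act v)) (hψT : IsPiecewisePoly T e (N.act v))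
    (h : ∀ ε ∈ N.incoming v,
      Continuous (N.nodeFun w b ε.1) ∧ IsPiecewisePoly S D (N.nodeFun w b ε.1)) :
    ∃ R : Finset ℝ, #R ≤ (#S + 1) * #T * D ∧
      Continuous (N.nodeFun w b v) ∧ IsPiecewisePoly (S ∪ R) (e * D) (N.nodeFun w b v) := by
  obtain ⟨hc, hpw⟩ := continuous_netInputFun_and_isPiecewisePoly h
  obtain ⟨R, hR, hpwR⟩ := IsPiecewisePoly.comp hψ hψT hc hpw
  rw [nodeFun_of_numInputs_le hv, if_neg hvl]
  exact ⟨R, hR, hψ.comp hc, hpwR⟩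

/-- Each unit of layer `ℓ + 1` applies its activation to a function that is polynomial on the
pieces of the breakpoint set `S` of layer `ℓ`, adding at most `(#S + 1) * B * e ^ ℓ` breakpoints
by `IsPiecewisePoly.comp`. -/
theorem exists_isPiecewisePoly_nodeFun {B e : ℕ} (he : 1 ≤ e)
    (hact : ∀ v : Fin N.numNodes, N.numInputs ≤ (v : ℕ) → (v : ℕ) ≠ N.numNodes - 1 →
      Continuous (N.act v) ∧ ∃ T : Finset ℝ, #T ≤ B ∧ IsPiecewisePoly T e (N.act v))
    (ℓ : ℕ) :
    ∃ S : Finset ℝ,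
      #S + 1 ≤ ∏ j ∈ range ℓ, (1 + #(N.layerNodes (j + 1)) * B * e ^ j) ∧
      ∀ v, N.layer v ≤ ℓ → (v : ℕ) ≠ N.numNodes - 1 →
        Continuous (N.nodeFun w b v) ∧ IsPiecewisePoly S (e ^ ℓ) (N.nodeFun w b v) := by
  induction ℓ with
  | zero =>
    refine ⟨∅, by simp, fun v hv hvl => ?_⟩
    by_cases hin : (v : ℕ) < N.numInputs
    · rw [nodeFun_of_lt_numInputs hin, pow_zero]
      exact ⟨continuous_id, .id ∅⟩
    · rw [nodeFun_of_numInputs_le (not_lt.1 hin), if_neg hvl,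
        netInputFun_of_layer_eq_zero (Nat.le_zero.1 hv)]
      exact ⟨continuous_const, .const _ _ _⟩
  | succ ℓ ih =>
    obtain ⟨S, hScard, hS⟩ := ih
    have hunit : ∀ v, ∃ R : Finset ℝ, #R ≤ (#S + 1) * B * e ^ ℓ ∧
        (N.layer v = ℓ + 1 → (v : ℕ) ≠ N.numNodes - 1 →
          Continuous (N.nodeFun w b v) ∧
            IsPiecewisePoly (S ∪ R) (e ^ (ℓ + 1)) (N.nodeFun w b v)) := by
      intro v
      by_cases hv : N.layer v = ℓ + 1 ∧ (v : ℕ) ≠ N.numNodes - 1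
      · have hin : N.numInputs ≤ (v : ℕ) := not_lt.1 fun h => by
          have := layer_eq_zero_of_lt_numInputs h; omega
        obtain ⟨hψ, T, hTB, hψT⟩ := hact v hin hv.2
        obtain ⟨R, hR, hpwR⟩ := exists_isPiecewisePoly_nodeFun_of_incoming hin hv.2 hψ hψT
          fun ε hε => hS ε.1 (by have := layer_lt_of_mem_incoming hε; omega)
            (val_fst_ne_of_mem_incoming hε)
        exact ⟨R, hR.trans (by gcongr), fun _ _ => pow_succ' e ℓ ▸ hpwR⟩
      · exact ⟨∅, by simp, fun h1 h2 => absurd ⟨h1, h2⟩ hv⟩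
    choose R hRcard hR using hunit
    set U := (N.layerNodes (ℓ + 1)).biUnion R
    refine ⟨S ∪ U, ?_, fun v hv hvl => ?_⟩
    · calc #(S ∪ U) + 1 ≤ #S + #(N.layerNodes (ℓ + 1)) * ((#S + 1) * B * e ^ ℓ) + 1 := by
            have hU : #U ≤ #(N.layerNodes (ℓ + 1)) * ((#S + 1) * B * e ^ ℓ) :=
              card_biUnion_le.trans (sum_le_card_nsmul _ _ _ fun v _ => hRcard v)
            have := card_union_le S U
            omega
        _ = (#S + 1) * (1 + #(N.layerNodes (ℓ + 1)) * B * e ^ ℓ) := by ring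
        _ ≤ _ := by rw [prod_range_succ]; gcongr
    rcases (Nat.le_succ_iff.1 hv) with hv | hv
    · exact ⟨(hS v hv hvl).1,
        (hS v hv hvl).2.mono subset_union_left (Nat.pow_le_pow_right he ℓ.le_succ)⟩
    · refine ⟨(hR v hv hvl).1, (hR v hv hvl).2.mono ?_ le_rfl⟩
      exact union_subset_union_right (subset_biUnion_of_mem R (mem_filter.2 ⟨mem_univ v, hv⟩))

theorem exists_isPiecewisePoly_netInputFun_outNode {B e k : ℕ} (he : 1 ≤ e)
    (hact : ∀ v : Fin N.numNodes, N.numInputs ≤ (v : ℕ) → (v : ℕ) ≠ N.numNodes - 1 →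
      Continuous (N.act v) ∧ ∃ T : Finset ℝ, #T ≤ B ∧ IsPiecewisePoly T e (N.act v))
    (hk : N.depth = k + 1) :
    ∃ S : Finset ℝ,
      #S + 1 ≤ ∏ j ∈ range k, (1 + #(N.layerNodes (j + 1)) * B * e ^ j) ∧
      Continuous (N.netInputFun w b N.outNode) ∧
        IsPiecewisePoly S (e ^ k) (N.netInputFun w b N.outNode) := by
  obtain ⟨S, hS, hnodes⟩ := exists_isPiecewisePoly_nodeFun (w := w) (b := b) he hact k
  refine ⟨S, hS, continuous_netInputFun_and_isPiecewisePoly fun ε hε => hnodes ε.1 ?_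
    (val_fst_ne_of_mem_incoming hε)⟩
  have := layer_lt_of_mem_incoming hε
  rw [depth] at hk
  omega

end

end NNArch

lemma prod_le_sum_div_card_pow {ι : Type*} (s : Finset ι) (z : ι → ℝ)
    (hz : ∀ i ∈ s, 0 ≤ z i) :
    ∏ i ∈ s, z i ≤ ((∑ i ∈ s, z i) / #s) ^ #s := by
  rcases s.eq_empty_or_nonempty with rfl | hs
  · simp
  have hk : (#s : ℝ) ≠ 0 := Nat.cast_ne_zero.2 hs.card_pos.ne'
  have hgm := Real.geom_mean_le_arith_mean_weighted s (fun _ => (#s : ℝ)⁻¹) z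
    (fun _ _ => by positivity) (by simp [hk]) hz
  rw [Real.finsetProd_rpow s z hz, ← mul_sum, inv_mul_eq_div] at hgm
  calc ∏ i ∈ s, z i = ((∏ i ∈ s, z i) ^ ((#s : ℝ)⁻¹)) ^ #s :=
        (Real.rpow_inv_natCast_pow (prod_nonneg hz) hs.card_pos.ne').symm
    _ ≤ _ := pow_le_pow_left₀ (Real.rpow_nonneg (prod_nonneg hz) _) hgm _

lemma two_mul_div_pow_le {W : ℝ} {k : ℕ} (hW : k + 1 ≤ W) :
    2 * (W / k) ^ k ≤ 13 ^ (k + 1) * (W / (k + 1)) ^ (k + 1) := by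
  rcases k.eq_zero_or_pos with rfl | hk
  · norm_num at hW ⊢
    linarith
  have hk1 : (1 : ℝ) ≤ k := by exact_mod_cast hk
  have hW0 : 0 ≤ W := by linarith
  rw [div_pow, div_pow, ← mul_div_assoc, ← mul_div_assoc,
    div_le_div_iff₀ (by positivity) (by positivity)]
  have h2k : ((k : ℝ) + 1) ^ k ≤ (2 * k) ^ k :=
    pow_le_pow_left₀ (by positivity) (by linarith) k
  have h13 : (2 : ℝ) * 2 ^ k ≤ 13 ^ (k + 1) := by
    rw [← pow_succ']
    exact pow_le_pow_left₀ (by norm_num) (by norm_num) _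
  calc 2 * W ^ k * ((k : ℝ) + 1) ^ (k + 1)
      = 2 * W ^ k * (((k : ℝ) + 1) ^ k * (k + 1)) := by ring
    _ ≤ 2 * W ^ k * ((2 * k) ^ k * W) :=
        mul_le_mul_of_nonneg_left (mul_le_mul h2k hW (by positivity) (by positivity))
          (by positivity)
    _ = (2 * 2 ^ k) * W ^ (k + 1) * (k : ℝ) ^ k := by ring
    _ ≤ 13 ^ (k + 1) * W ^ (k + 1) * (k : ℝ) ^ k :=
        mul_le_mul_of_nonneg_right (mul_le_mul_of_nonneg_right h13 (pow_nonneg hW0 _))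
          (by positivity)

lemma pow_sum_range_le_rpow {d : ℝ} (hd : 1 ≤ d) (L : ℕ) :
    d ^ (∑ j ∈ range L, j) ≤ (d ^ (((L : ℝ) + 1) / 2)) ^ L := by
  rw [← Real.rpow_natCast, ← Real.rpow_natCast (d ^ _), ← Real.rpow_mul (by linarith)]
  refine Real.rpow_le_rpow_of_exponent_le hd ?_
  have h : (∑ j ∈ range L, j) * 2 ≤ L * (L + 1) := by
    rw [sum_range_id_mul_two]
    exact Nat.mul_le_mul_left _ (by omega)
  have h' : ((∑ j ∈ range L, j : ℕ) : ℝ) * 2 ≤ L * (L + 1) := by exact_mod_cast h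
  linarith

lemma prod_one_add_mul_le {p d k : ℕ} (hp : 1 ≤ p) (hd : 1 ≤ d) {n : ℕ → ℕ}
    (hn : ∀ j < k, 1 ≤ n j) :
    (∏ j ∈ range k, (1 + n j * (p - 1) * d ^ j)) * (d ^ k + 1) ≤
      2 * p ^ k * d ^ (∑ j ∈ range (k + 1), j) * ∏ j ∈ range k, n j := by
  have hfactor : ∀ j ∈ range k, 1 + n j * (p - 1) * d ^ j ≤ n j * p * d ^ j := fun j hj => by
    have := hn j (mem_range.1 hj)
    have := Nat.one_le_pow j d hd
    obtain ⟨p', rfl⟩ : ∃ p', p = p' + 1 := ⟨p - 1, by omega⟩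
    simp only [Nat.add_sub_cancel]
    nlinarith
  calc (∏ j ∈ range k, (1 + n j * (p - 1) * d ^ j)) * (d ^ k + 1)
      ≤ (∏ j ∈ range k, (n j * p * d ^ j)) * (2 * d ^ k) := by
        have := Nat.one_le_pow k d hd
        gcongr (?_ * ?_)
        · exact prod_le_prod' hfactor
        · omega
    _ = _ := by
        rw [prod_mul_distrib, prod_mul_distrib, prod_const, prod_pow_eq_pow_sum, card_range,
          sum_range_succ, pow_add]
        ring

/-- AM-GM bounds `∏ n j` by `(W / k) ^ k`, and `two_mul_div_pow_le` absorbs the passage from `k`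
to `k + 1` factors into the constant `13`. -/
theorem le_mul_logb_of_two_pow_le {p d W k m : ℕ} (hp : 1 ≤ p) (hd : 1 ≤ d)
    (hkW : k + 1 ≤ W) (n : ℕ → ℕ) (hnW : ∑ j ∈ range k, n j ≤ W)
    (hm : 2 ^ m ≤ 2 * p ^ k * d ^ (∑ j ∈ range (k + 1), j) * ∏ j ∈ range k, n j) :
    (m : ℝ) ≤ ((k + 1 : ℕ) : ℝ) * Real.logb 2
      (13 * p * (d : ℝ) ^ ((((k + 1 : ℕ) : ℝ) + 1) / 2) * W / ((k + 1 : ℕ) : ℝ)) := by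
  have hd1 : (1 : ℝ) ≤ d := by exact_mod_cast hd
  have hp1 : (1 : ℝ) ≤ p := by exact_mod_cast hp
  have hW : (k : ℝ) + 1 ≤ W := by exact_mod_cast hkW
  push_cast
  set dr := (d : ℝ) ^ (((k : ℝ) + 1 + 1) / 2)
  have hdr : 0 < dr := Real.rpow_pos_of_pos (by linarith) _
  set K := 13 * p * dr * W / (k + 1)
  have hpk : (p : ℝ) ^ k ≤ p ^ (k + 1) := pow_le_pow_right₀ hp1 k.le_succ
  have hdk : (d : ℝ) ^ (∑ j ∈ range (k + 1), j) ≤ dr ^ (k + 1) := by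
    simpa using pow_sum_range_le_rpow hd1 (k + 1)
  have hnk : 2 * ∏ j ∈ range k, (n j : ℝ) ≤ 13 ^ (k + 1) * (W / (k + 1)) ^ (k + 1) := by
    refine (mul_le_mul_of_nonneg_left ?_ (by norm_num)).trans (two_mul_div_pow_le hW)
    refine (prod_le_sum_div_card_pow _ _ fun _ _ => by positivity).trans ?_
    rw [card_range]
    gcongr
    exact_mod_cast hnW
  have hK : (2 : ℝ) ^ m ≤ K ^ (k + 1) :=
    calc (2 : ℝ) ^ m
        ≤ p ^ k * d ^ (∑ j ∈ range (k + 1), j) * (2 * ∏ j ∈ range k, (n j : ℝ)) := by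
          rw [mul_left_comm, ← mul_assoc, ← mul_assoc]
          exact_mod_cast hm
      _ ≤ p ^ (k + 1) * dr ^ (k + 1) * (13 ^ (k + 1) * (W / (k + 1)) ^ (k + 1)) :=
          mul_le_mul (mul_le_mul hpk hdk (by positivity) (by positivity)) hnk (by positivity)
            (mul_nonneg (by positivity) (pow_nonneg hdr.le _))
      _ = K ^ (k + 1) := by ring
  calc (m : ℝ) = Real.logb 2 (2 ^ m) := by
        rw [Real.logb_pow, Real.logb_self_eq_one one_lt_two, mul_one]
    _ ≤ Real.logb 2 (K ^ (k + 1)) := Real.logb_le_logb_of_le one_lt_two (by positivity) hK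
    _ = (k + 1) * Real.logb 2 K := by rw [Real.logb_pow]; push_cast; ring

lemma mul_sub_half_neg_of_abs_sub_mod_two_lt {f : ℝ → ℝ} {i : ℕ}
    (hi : |f i - ((i % 2 : ℕ) : ℝ)| < 1 / 2)
    (hi' : |f (i + 1 : ℕ) - (((i + 1) % 2 : ℕ) : ℝ)| < 1 / 2) :
    (f i - 1 / 2) * (f (i + 1) - 1 / 2) < 0 := by
  rcases Nat.mod_two_eq_zero_or_one i with h | h
  · rw [h, Nat.cast_zero, sub_zero, abs_lt] at hi
    rw [show (i + 1) % 2 = 1 by omega, Nat.cast_one, abs_lt] at hi'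
    push_cast at hi'
    exact mul_neg_of_neg_of_pos (by linarith) (by linarith)
  · rw [h, Nat.cast_one, abs_lt] at hi
    rw [show (i + 1) % 2 = 0 by omega, Nat.cast_zero, sub_zero, abs_lt] at hi'
    push_cast at hi'
    exact mul_neg_of_pos_of_neg (by linarith) (by linarith)

theorem statement4_general (N : NNArch) (p d : ℕ) (hp : 1 ≤ p) (hd : 1 ≤ d)
    (hact : ∀ v : Fin N.numNodes, N.numInputs ≤ (v : ℕ) →
      (v : ℕ) ≠ N.numNodes - 1 →
      Continuous (N.act v) ∧ PiecewisePoly (N.act v) p d)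
    (w : Fin N.numNodes × Fin N.numNodes → ℝ) (b : Fin N.numNodes → ℝ)
    (f : ℝ → ℝ) (hfdef : ∀ x : ℝ, f x = N.eval w b (fun _ => x))
    (m : ℕ)
    (hf : ∀ x : ℕ, x < 2 ^ m → |f (x : ℝ) - ((x % 2 : ℕ) : ℝ)| < 1 / 2) :
    (m : ℝ) ≤ (N.depth : ℝ) *
      Real.logb 2 (13 * (p : ℝ) * (d : ℝ) ^ (((N.depth : ℝ) + 1) / 2) *
        (N.numParams : ℝ) / (N.depth : ℝ)) := by
  have hact' : ∀ v : Fin N.numNodes, N.numInputs ≤ (v : ℕ) →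
      (v : ℕ) ≠ N.numNodes - 1 →
      Continuous (N.act v) ∧ ∃ T : Finset ℝ, #T ≤ p - 1 ∧ IsPiecewisePoly T d (N.act v) :=
    fun v hv hvl => by
      obtain ⟨hc, hpw⟩ := hact v hv hvl
      obtain ⟨T, hT, hTpw⟩ := hpw.exists_isPiecewisePoly
      exact ⟨hc, T, by omega, hTpw⟩
  have hf_eq : f = N.netInputFun w b N.outNode := funext fun x => by
    rw [hfdef, ← NNArch.nodeFun_outNode]
    rfl
  have halt : ∀ i : ℕ, i + 1 < 2 ^ m → (f i - 1 / 2) * (f (i + 1) - 1 / 2) < 0 := fun i hi =>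
    mul_sub_half_neg_of_abs_sub_mod_two_lt (hf i (by omega)) (hf (i + 1) hi)
  cases hL : N.depth with
  | zero =>
    rw [NNArch.netInputFun_of_layer_eq_zero hL] at hf_eq
    have hfS : IsPiecewisePoly ∅ 0 f := hf_eq ▸ IsPiecewisePoly.const ∅ 0 (b N.outNode)
    have h2m := le_of_isPiecewisePoly_of_alternating (hf_eq ▸ continuous_const) hfS halt
    rw [card_empty] at h2m
    have hm : m = 0 := by
      by_contra hm
      have := Nat.one_lt_two_pow hm
      omega
    simp [hm]
  | succ k =>
    obtain ⟨S, hS, hfc, hfS⟩ := NNArch.exists_isPiecewisePoly_netInputFun_outNode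
      (w := w) (b := b) hd hact' hL
    rw [← hf_eq] at hfc hfS
    have hnW : ∑ j ∈ range k, #(N.layerNodes (j + 1)) ≤ N.numParams :=
      (N.sum_card_layerNodes_le_numUnits k).trans N.numUnits_le_numParams
    have hkW : k + 1 ≤ N.numParams := hL ▸ N.depth_le_numUnits.trans N.numUnits_le_numParams
    exact le_mul_logb_of_two_pow_le hp hd hkW _ hnW <|
      (le_of_isPiecewisePoly_of_alternating hfc hfS halt).trans <|
        (Nat.mul_le_mul_right _ hS).trans <|
          prod_one_add_mul_le hp hd fun j hj => card_pos.2 (N.layerNodes_nonempty (by omega))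

/-- **Theorem 6 (hardness of the mod-2 function).**  Suppose a network with
`W` parameters and `L` layers, a single real input and a single real output,
with continuous piecewise polynomial activation functions (at most `p ≥ 1`
pieces, degree at most `d ≥ 1`), computes `f : ℝ → ℝ` such that
`|f(x) − (x mod 2)| < 1/2` for all integers `x ∈ {0, 1, …, 2^m − 1}`.  Then
`m ≤ L·log₂(13·p·d^{(L+1)/2}·W/L)`. -/
theorem statement4 (N : NNArch) (p d : ℕ) (hp : 1 ≤ p) (hd : 1 ≤ d)
    (hinput : N.numInputs = 1)
    (hact : ∀ v : Fin N.numNodes, N.numInputs ≤ (v : ℕ) →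
      (v : ℕ) ≠ N.numNodes - 1 →
      Continuous (N.act v) ∧ PiecewisePoly (N.act v) p d)
    (w : Fin N.numNodes × Fin N.numNodes → ℝ) (b : Fin N.numNodes → ℝ)
    (f : ℝ → ℝ) (hfdef : ∀ x : ℝ, f x = N.eval w b (fun _ => x))
    (m : ℕ)
    (hf : ∀ x : ℕ, x < 2 ^ m → |f (x : ℝ) - ((x % 2 : ℕ) : ℝ)| < 1 / 2) :
    (m : ℝ) ≤ (N.depth : ℝ) *
      Real.logb 2 (13 * (p : ℝ) * (d : ℝ) ^ (((N.depth : ℝ) + 1) / 2) *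
        (N.numParams : ℝ) / (N.depth : ℝ)) :=
  statement4_general N p d hp hd hact w b f hfdef m hf
end

section
/- Let m, t, w, r be real numbers with r ≥ 16, m ≥ w ≥ t ≥ 0 and w > 0. If 2^m ≤ 2^t·(m·r/w)^w, then m ≤ t + w·log₂(2·r·log₂ r). -/
/-!
Taking `log₂` of the hypothesis and using `t ≤ w` gives, for `x = m / w` and `L = log₂ r`,
`x ≤ 1 + L + log₂ x`. Since `x - log₂ x` grows, this forces `x ≤ 2L` once `L ≥ 4`
(the tangent line of `log₂` at `8` makes this quantitative), and then
`log₂ (m r / w) = log₂ (x r) ≤ log₂ (2 r L)`.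
-/

open Real

lemma Real.log_le_log_add_sub_div {a x : ℝ} (ha : 0 < a) (hx : 0 < x) :
    log x ≤ log a + (x - a) / a := by
  have h := log_le_sub_one_of_pos (div_pos hx ha)
  rw [log_div hx.ne' ha.ne'] at h
  rw [sub_div, div_self ha.ne']
  linarith

lemma Real.le_add_mul_logb_of_rpow_le {b m t w y : ℝ} (hb : 1 < b) (hy : 0 < y)
    (h : b ^ m ≤ b ^ t * y ^ w) : m ≤ t + w * logb b y := by
  have hb0 : 0 < b := zero_lt_one.trans hb
  have h' := logb_le_logb_of_le hb (rpow_pos_of_pos hb0 m) h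
  rwa [logb_mul (rpow_pos_of_pos hb0 t).ne' (rpow_pos_of_pos hy w).ne',
    logb_rpow hb0 hb.ne', logb_rpow hb0 hb.ne', logb_rpow_eq_mul_logb_of_pos hy] at h'

lemma le_two_mul_of_le_one_add_add_logb_two {x L : ℝ} (hL : 4 ≤ L) (hx : 0 < x)
    (h : x ≤ 1 + L + logb 2 x) : x ≤ 2 * L := by
  by_contra! hxL
  have hlog2 : 1 / 2 < log 2 := lt_trans (by norm_num) log_two_gt_d9
  have hlog8 : log 8 = 3 * log 2 := by
    rw [show (8 : ℝ) = 2 ^ 3 by norm_num, log_pow]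
    norm_num
  have htangent := log_le_log_add_sub_div (by norm_num : (0 : ℝ) < 8) hx
  have h' : x * log 2 ≤ (1 + L) * log 2 + log x := by
    have hl : 0 < log 2 := by positivity
    have := mul_le_mul_of_nonneg_right h hl.le
    rwa [add_mul, logb, div_mul_cancel₀ _ hl.ne'] at this
  -- with `L < x / 2` these combine to `(x - 8) (log 2 - 1/4) < 0`, impossible as `x > 8`
  nlinarith [mul_pos (show 0 < x - 8 by linarith) (show 0 < log 2 - 1 / 4 by linarith)]

theorem statement13_general (m t w r : ℝ) (hr : 16 ≤ r) (hwm : w ≤ m) (htw : t ≤ w)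
    (hw : 0 < w)
    (h : (2 : ℝ) ^ m ≤ (2 : ℝ) ^ t * (m * r / w) ^ w) :
    m ≤ t + w * Real.logb 2 (2 * r * Real.logb 2 r) := by
  have hm : 0 < m := hw.trans_le hwm
  have hr0 : 0 < r := by linarith
  have hL : 4 ≤ logb 2 r := by
    rw [show (4 : ℝ) = logb 2 (2 ^ (4 : ℝ)) by rw [logb_rpow two_pos (by norm_num)]]
    exact logb_le_logb_of_le one_lt_two (by positivity) (by norm_num; linarith)
  have hsplit : logb 2 (m * r / w) = logb 2 (m / w) + logb 2 r := by
    rw [mul_div_right_comm, logb_mul (by positivity) hr0.ne']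
  have hlog := le_add_mul_logb_of_rpow_le one_lt_two (by positivity) h
  have hratio : m / w ≤ 2 * logb 2 r := by
    refine le_two_mul_of_le_one_add_add_logb_two hL (by positivity) ?_
    rw [hsplit] at hlog
    rw [div_le_iff₀ hw]
    linarith
  have hmono : logb 2 (m * r / w) ≤ logb 2 (2 * r * logb 2 r) := by
    refine logb_le_logb_of_le one_lt_two (by positivity) ?_
    rw [mul_div_right_comm]
    linarith [mul_le_mul_of_nonneg_right hratio hr0.le]
  calc m ≤ t + w * logb 2 (m * r / w) := hlog
    _ ≤ t + w * logb 2 (2 * r * logb 2 r) := by gcongr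

/-- **Lemma 9 (arithmetic lemma).**  Let `m, t, w, r` be real numbers with
`r ≥ 16`, `m ≥ w ≥ t ≥ 0` and `w > 0`.  If `2^m ≤ 2^t·(m·r/w)^w`, then
`m ≤ t + w·log₂(2·r·log₂ r)`. -/
theorem statement13 (m t w r : ℝ) (hr : 16 ≤ r) (hwm : w ≤ m) (htw : t ≤ w)
    (ht : 0 ≤ t) (hw : 0 < w)
    (h : (2 : ℝ) ^ m ≤ (2 : ℝ) ^ t * (m * r / w) ^ w) :
    m ≤ t + w * Real.logb 2 (2 * r * Real.logb 2 r) :=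
  statement13_general m t w r hr hwm htw hw h
end

section
/- There exists a universal constant C > 0 such that for all positive integers m and n, there is a feedforward ReLU network architecture with at most C·(m + n) parameters and at most C·m computation units whose class F of computed real-valued functions (as the parameters range over all real values) satisfies VCdim(F) ≥ m·n. -/
/-!
Column `j` of a labelling of the `m × n` grid is stored in one real weight, the base-4 number
`a_j = ∑ b_e 4^{-e}` whose digit `b_e ∈ {0, 1}` (for `e < m`) is the label of the grid point
`(m - 1 - e, j)`. The grid point `(k, j)` is the input `4^{-k} e_j`, so the first unit computes
`a_j 4^{-k}`, which moves the label of `(k, j)` to digit `m - 1`.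
Since all digits are `0` or `1`, such a number `s = b + s'/4` lies in `[0, 1/3] ∪ [1, 4/3]`, hence
`max 0 (3s - 1) - max 0 (3s - 2) = b` and `s' = 4 (s - b)`: a chain of `m` blocks of three units
peels off the digits `0, …, m - 1` one at a time, and the output unit returns `b_{m-1} - 1/2`.
This takes `3m + 1` units and `O(m + n)` parameters.
-/

open Finset

namespace NNArch

lemma value_of_lt (N : NNArch) (w b x) {v : Fin N.numNodes} (hv : (v : ℕ) < N.numInputs) :
    N.value w b x v = x ⟨v, hv⟩ := by
  rw [value, dif_pos hv]

lemma value_of_le (N : NNArch) (w b x) {v : Fin N.numNodes} (hv : N.numInputs ≤ v) :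
    N.value w b x v =
      let s := ∑ e ∈ N.incoming v, w e * N.value w b x e.1 + b v
      if (v : ℕ) = N.numNodes - 1 then s else N.act v s := by
  rw [value, dif_neg (by omega), sum_attach _ fun e => w e * N.value w b x e.1]

lemma injOn_incoming (N : NNArch) (v : Fin N.numNodes) :
    Set.InjOn (fun e : Fin N.numNodes × Fin N.numNodes => (e.1 : ℕ)) (N.incoming v) :=
  fun _ he _ he' h => Prod.ext (Fin.ext h) ((mem_filter.1 he).2.trans (mem_filter.1 he').2.symm)

/-- Nodes are addressed by their codes in `ℕ`; `pred v` lists the sources of the edges into `v`,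
except that codes `≥ v` are ignored, as is `pred v` for an input node `v < d`. -/
abbrev ofPred (d M : ℕ) (hdM : d < M) (pred : ℕ → Finset ℕ) : NNArch where
  numNodes := M
  numInputs := d
  hIn := hdM
  edges := univ.filter fun e => e.1 < e.2 ∧ d ≤ (e.2 : ℕ) ∧ (e.1 : ℕ) ∈ pred e.2
  hTopo _ he := (mem_filter.1 he).2.1
  hTarget _ he := (mem_filter.1 he).2.2.1
  act _ z := max 0 z

/-- `0` at codes that are not nodes. -/
noncomputable def valueAt (N : NNArch) (W : ℕ → ℕ → ℝ) (B : ℕ → ℝ)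
    (x : Fin N.numInputs → ℝ) (v : ℕ) : ℝ :=
  if h : v < N.numNodes then N.value (fun e => W e.1 e.2) (fun u => B u) x ⟨v, h⟩ else 0

lemma eval_eq_valueAt (N : NNArch) (W : ℕ → ℕ → ℝ) (B : ℕ → ℝ) (x : Fin N.numInputs → ℝ) :
    N.eval (fun e => W e.1 e.2) (fun u => B u) x = N.valueAt W B x (N.numNodes - 1) := by
  rw [valueAt, dif_pos (by have := N.hIn; omega)]
  rfl

lemma valueAt_of_lt (N : NNArch) (W B x) {v : ℕ} (hv : v < N.numInputs) :
    N.valueAt W B x v = x ⟨v, hv⟩ := by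
  rw [valueAt, dif_pos (hv.trans N.hIn), value_of_lt]

section ofPred

variable {d M : ℕ} {hdM : d < M} {pred : ℕ → Finset ℕ}

lemma isReLU_ofPred : (ofPred d M hdM pred).IsReLU := fun _ => rfl

lemma numUnits_ofPred : (ofPred d M hdM pred).numUnits = M - d := rfl

lemma mem_incoming_ofPred {e : Fin M × Fin M} {v : Fin M} :
    e ∈ (ofPred d M hdM pred).incoming v ↔
      e.2 = v ∧ e.1 < v ∧ d ≤ (v : ℕ) ∧ (e.1 : ℕ) ∈ pred v := by
  simp only [incoming, mem_filter, mem_univ, true_and]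
  constructor
  · rintro ⟨h, rfl⟩; exact ⟨rfl, h⟩
  · rintro ⟨rfl, h⟩; exact ⟨h, rfl⟩

lemma card_edges_ofPred_le : (ofPred d M hdM pred).edges.card ≤ ∑ v ∈ range M, (pred v).card := by
  rw [card_eq_sum_card_fiberwise (f := Prod.snd) (t := univ) fun _ _ => mem_univ _]
  refine (sum_le_sum fun v _ => card_le_card_of_injOn (fun e => (e.1 : ℕ)) ?_ ?_).trans_eq
    (Fin.sum_univ_eq_sum_range (fun v => (pred v).card) M)
  · intro e he
    obtain ⟨rfl, -, -, h⟩ := mem_incoming_ofPred.1 (mem_coe.1 he)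
    exact h
  · exact injOn_incoming _ v

lemma sum_incoming_ofPred (W : ℕ → ℕ → ℝ) (B : ℕ → ℝ) (x : Fin d → ℝ) (v : Fin M)
    (hd : d ≤ v) (hpred : ∀ u ∈ pred v, u < v) :
    ∑ e ∈ (ofPred d M hdM pred).incoming v,
        W e.1 e.2 * (ofPred d M hdM pred).value (fun e => W e.1 e.2) (fun u => B u) x e.1 =
      ∑ u ∈ pred v, W u v * (ofPred d M hdM pred).valueAt W B x u := by
  refine sum_bij (fun e _ => (e.1 : ℕ)) ?_ ?_ ?_ ?_
  · intro e he
    exact (mem_incoming_ofPred.1 he).2.2.2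
  · exact fun e he e' he' h => injOn_incoming _ v he he' h
  · intro u hu
    have hlt := hpred u hu
    exact ⟨(⟨u, hlt.trans v.isLt⟩, v),
      mem_incoming_ofPred.2 ⟨rfl, Fin.mk_lt_of_lt_val hlt, hd, hu⟩, rfl⟩
  · intro e he
    obtain ⟨rfl, -⟩ := mem_incoming_ofPred.1 he
    unfold valueAt
    rw [dif_pos e.1.isLt]

lemma valueAt_ofPred (W : ℕ → ℕ → ℝ) (B : ℕ → ℝ) (x : Fin d → ℝ) {v : ℕ}
    (hd : d ≤ v) (hv : v + 1 < M) (hpred : ∀ u ∈ pred v, u < v) :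
    (ofPred d M hdM pred).valueAt W B x v =
      max 0 (∑ u ∈ pred v, W u v * (ofPred d M hdM pred).valueAt W B x u + B v) := by
  unfold valueAt
  rw [dif_pos (show v < M by omega), value_of_le _ _ _ _ hd]
  dsimp only
  rw [if_neg (show v ≠ M - 1 by omega), sum_incoming_ofPred W B x ⟨v, by omega⟩ hd hpred]
  rfl

lemma valueAt_ofPred_last (W : ℕ → ℕ → ℝ) (B : ℕ → ℝ) (x : Fin d → ℝ)
    (hpred : ∀ u ∈ pred (M - 1), u < M - 1) :
    (ofPred d M hdM pred).valueAt W B x (M - 1) =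
      ∑ u ∈ pred (M - 1), W u (M - 1) * (ofPred d M hdM pred).valueAt W B x u + B (M - 1) := by
  unfold valueAt
  rw [dif_pos (show M - 1 < M by omega), value_of_le _ _ _ _ (show d ≤ M - 1 by omega)]
  dsimp only
  rw [if_pos rfl, sum_incoming_ofPred W B x ⟨M - 1, by omega⟩ (show d ≤ M - 1 by omega) hpred]
  rfl

end ofPred

end NNArch

noncomputable def digitSum (β : ℕ → Bool) : ℝ := ∑' e, ((β e).toNat : ℝ) * 4⁻¹ ^ e

lemma summable_digitSum (β : ℕ → Bool) : Summable fun e => ((β e).toNat : ℝ) * 4⁻¹ ^ e := by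
  refine .of_nonneg_of_le (fun e => by positivity) (fun e => ?_)
    (summable_geometric_of_lt_one (r := 4⁻¹) (by norm_num) (by norm_num))
  cases β e <;> simp

lemma digitSum_nonneg (β : ℕ → Bool) : 0 ≤ digitSum β :=
  tsum_nonneg fun e => by positivity

lemma digitSum_le (β : ℕ → Bool) : digitSum β ≤ 4 / 3 := by
  have hgeom := tsum_geometric_of_lt_one (r := (4:ℝ)⁻¹) (by norm_num) (by norm_num)
  calc digitSum β ≤ ∑' e : ℕ, (4:ℝ)⁻¹ ^ e :=
        (summable_digitSum β).tsum_le_tsum (fun e => by cases β e <;> simp)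
          (summable_geometric_of_lt_one (by norm_num) (by norm_num))
    _ = 4 / 3 := by rw [hgeom]; norm_num

lemma digitSum_eq_add_tail (β : ℕ → Bool) :
    digitSum β = (β 0).toNat + digitSum (fun e => β (e + 1)) / 4 := by
  rw [digitSum, (summable_digitSum β).tsum_eq_zero_add, digitSum, ← tsum_div_const]
  simp only [pow_zero, mul_one, pow_succ]
  congr 2
  funext e
  ring

lemma digitSum_shift (α : ℕ → Bool) (k : ℕ) :
    digitSum (fun e => decide (k ≤ e) && α (e - k)) = digitSum α / 4 ^ k := by
  induction k with
  | zero => simp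
  | succ k ih =>
    rw [digitSum_eq_add_tail, pow_succ, ← div_div, ← ih]
    simp [Nat.add_sub_add_right]

lemma max_zero_sub_max_zero_digitSum (β : ℕ → Bool) :
    max 0 (3 * digitSum β - 1) - max 0 (3 * digitSum β - 2) = (β 0).toNat := by
  have h0 := digitSum_nonneg fun e => β (e + 1)
  have h1 := digitSum_le fun e => β (e + 1)
  rw [digitSum_eq_add_tail]
  cases β 0
  · rw [max_eq_left, max_eq_left] <;> simp <;> linarith
  · rw [max_eq_right, max_eq_right] <;> simp <;> linarith

/-- Node layout of the extractor with inputs `0, …, n - 1`: unit `n + 3K` holds the residual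
`s_K` (with `s_0 = ∑ a_j x_j`), units `n + 3K + 1` and `n + 3K + 2` hold `p_K = max 0 (3 s_K - 1)`
and `q_K = max 0 (3 s_K - 2)`, and unit `n + 3K + 3` is `s_{K+1} = max 0 (4 s_K - 4 (p_K - q_K))`,
except for `K = m - 1`, where it is the output unit `p_K - q_K - 1/2`. -/
def extractorPred (n v : ℕ) : Finset ℕ :=
  if v = n then range n
  else if (v - n) % 3 = 0 then {v - 3, v - 2, v - 1}
  else {v - (v - n) % 3}

noncomputable def extractorWeight (n m : ℕ) (a : ℕ → ℝ) (u v : ℕ) : ℝ :=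
  if v = n then a u
  else if (v - n) % 3 = 0 then
    if v = n + 3 * m then (if u = v - 3 then 0 else if u = v - 2 then 1 else -1)
    else (if u = v - 3 then 4 else if u = v - 2 then -4 else 4)
  else 3

noncomputable def extractorBias (n m v : ℕ) : ℝ :=
  if v = n then 0
  else if (v - n) % 3 = 0 then (if v = n + 3 * m then -1 / 2 else 0)
  else if (v - n) % 3 = 1 then -1 else -2

abbrev bitExtractor (n m : ℕ) : NNArch :=
  NNArch.ofPred n (n + 3 * m + 1) (by omega) (extractorPred n)

lemma extractorPred_lt {n v : ℕ} (hv : n ≤ v) : ∀ u ∈ extractorPred n v, u < v := by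
  unfold extractorPred
  split_ifs <;> simp <;> omega

lemma card_extractorPred_le (n v : ℕ) : (extractorPred n v).card ≤ 3 + if v = n then n else 0 := by
  unfold extractorPred
  split_ifs
  · simp
  · exact (card_le_three).trans (by omega)
  · simp

lemma numParams_bitExtractor_le (n m : ℕ) : (bitExtractor n m).numParams ≤ 4 * n + 12 * m + 4 := by
  have hedges : (bitExtractor n m).edges.card ≤ _ := NNArch.card_edges_ofPred_le.trans
    (sum_le_sum fun v _ => card_extractorPred_le n v)
  rw [sum_add_distrib, sum_const, card_range, sum_ite_eq', smul_eq_mul] at hedges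
  rw [NNArch.numParams, NNArch.numUnits_ofPred]
  split_ifs at hedges <;> omega

lemma extractorPred_of_lt_three (n K : ℕ) {r : ℕ} (hr₀ : 0 < r) (hr₃ : r < 3) :
    extractorPred n (n + 3 * K + r) = {n + 3 * K} := by
  rw [extractorPred, if_neg (by omega), if_neg (by omega)]
  congr 1
  omega

lemma extractorPred_add_three (n K : ℕ) :
    extractorPred n (n + 3 * K + 3) = {n + 3 * K, n + 3 * K + 1, n + 3 * K + 2} := by
  rw [extractorPred, if_neg (by omega), if_pos (by omega)]
  congr 2

noncomputable def extractorValue (n m : ℕ) (a : ℕ → ℝ) (x : Fin n → ℝ) (v : ℕ) : ℝ :=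
  (bitExtractor n m).valueAt (extractorWeight n m a) (extractorBias n m) x v

section values

variable {n m : ℕ} (a : ℕ → ℝ) (x : Fin n → ℝ)

local notation "val" => extractorValue n m a x

lemma extractorValue_of_lt {u : ℕ} (hu : u < n) : val u = x ⟨u, hu⟩ :=
  NNArch.valueAt_of_lt _ _ _ _ hu

lemma extractorValue_first (hm : 0 < m) : val n = max 0 (∑ u ∈ range n, a u * val u) := by
  unfold extractorValue
  rw [NNArch.valueAt_ofPred _ _ _ le_rfl (by omega) (extractorPred_lt le_rfl)]
  simp [extractorPred, extractorWeight, extractorBias]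

lemma extractorValue_add_one {K : ℕ} (hK : K < m) :
    val (n + 3 * K + 1) = max 0 (3 * val (n + 3 * K) - 1) := by
  unfold extractorValue
  rw [NNArch.valueAt_ofPred _ _ _ (by omega) (by omega) (extractorPred_lt (by omega)),
    extractorPred_of_lt_three n K (r := 1) (by omega) (by omega), sum_singleton]
  simp only [extractorWeight, extractorBias]
  split_ifs <;> first | omega | ring_nf

lemma extractorValue_add_two {K : ℕ} (hK : K < m) :
    val (n + 3 * K + 2) = max 0 (3 * val (n + 3 * K) - 2) := by
  unfold extractorValue
  rw [NNArch.valueAt_ofPred _ _ _ (by omega) (by omega) (extractorPred_lt (by omega)),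
    extractorPred_of_lt_three n K (r := 2) (by omega) (by omega), sum_singleton]
  simp only [extractorWeight, extractorBias]
  split_ifs <;> first | omega | ring_nf

lemma extractorValue_add_three {K : ℕ} (hK : K + 1 < m) :
    val (n + 3 * K + 3) =
      max 0 (4 * val (n + 3 * K) - 4 * (val (n + 3 * K + 1) - val (n + 3 * K + 2))) := by
  unfold extractorValue
  rw [NNArch.valueAt_ofPred _ _ _ (by omega) (by omega) (extractorPred_lt (by omega)),
    extractorPred_add_three, sum_insert (by simp), sum_insert (by simp), sum_singleton]
  simp only [extractorWeight, extractorBias]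
  split_ifs <;> first | omega | ring_nf

lemma extractorValue_add_one_sub_add_two {K : ℕ} (hK : K < m) {γ : ℕ → Bool}
    (hγ : val (n + 3 * K) = digitSum γ) :
    val (n + 3 * K + 1) - val (n + 3 * K + 2) = (γ 0).toNat := by
  rw [extractorValue_add_one a x hK, extractorValue_add_two a x hK, hγ,
    max_zero_sub_max_zero_digitSum]

lemma extractorValue_add_three_mul {β : ℕ → Bool} (hβ : val n = digitSum β) {K : ℕ} (hK : K < m) :
    val (n + 3 * K) = digitSum fun e => β (e + K) := by
  induction K with
  | zero => simpa using hβ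
  | succ K ih =>
    have hγ := ih (by omega)
    have htail := digitSum_nonneg fun e => β (e + 1 + K)
    rw [show n + 3 * (K + 1) = n + 3 * K + 3 by ring, extractorValue_add_three a x hK,
      extractorValue_add_one_sub_add_two a x (by omega) hγ, hγ, digitSum_eq_add_tail,
      max_eq_right (by linarith)]
    simp only [zero_add, add_right_comm _ 1 K, ← add_assoc]
    ring

end values

lemma eval_bitExtractor (n k : ℕ) (a : ℕ → ℝ) (x : Fin n → ℝ) :
    (bitExtractor n (k + 1)).eval (fun e => extractorWeight n (k + 1) a e.1 e.2)
        (fun v => extractorBias n (k + 1) v) x =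
      extractorValue n (k + 1) a x (n + 3 * k + 1) - extractorValue n (k + 1) a x (n + 3 * k + 2)
        - 1 / 2 := by
  rw [NNArch.eval_eq_valueAt, NNArch.valueAt_ofPred_last _ _ _ (extractorPred_lt (by omega)),
    show n + 3 * (k + 1) + 1 - 1 = n + 3 * k + 3 by omega, extractorPred_add_three,
    sum_insert (by simp), sum_insert (by simp), sum_singleton]
  simp only [extractorValue, extractorWeight, extractorBias]
  split_ifs <;> first | omega | ring

lemma eval_bitExtractor_of_digitSum {n k : ℕ} (a : ℕ → ℝ) (x : Fin n → ℝ) {β : ℕ → Bool}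
    (hβ : extractorValue n (k + 1) a x n = digitSum β) :
    (bitExtractor n (k + 1)).eval (fun e => extractorWeight n (k + 1) a e.1 e.2)
        (fun v => extractorBias n (k + 1) v) x = (β k).toNat - 1 / 2 := by
  rw [eval_bitExtractor, extractorValue_add_one_sub_add_two a x (by omega)
    (extractorValue_add_three_mul a x hβ (by omega))]
  simp

noncomputable def gridPoint (n k j : ℕ) : Fin n → ℝ := fun u => if (u : ℕ) = j then 4⁻¹ ^ k else 0

noncomputable def gridPoints (n m : ℕ) : Finset (Fin n → ℝ) :=
  (range m ×ˢ range n).image fun p => gridPoint n p.1 p.2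

lemma card_gridPoints (n m : ℕ) : (gridPoints n m).card = m * n := by
  rw [gridPoints, card_image_of_injOn, card_product, card_range, card_range]
  rintro ⟨k, j⟩ hkj ⟨k', j'⟩ - h
  have hj : j < n := (mem_range.1 (mem_product.1 hkj).2)
  have hcoord := congrFun h ⟨j, hj⟩
  simp only [gridPoint, if_true] at hcoord
  split_ifs at hcoord with hjj
  · exact Prod.ext (pow_right_injective₀ (by norm_num) (by norm_num) hcoord) hjj
  · exact absurd hcoord (by positivity)

noncomputable def labelDigits (n m : ℕ) (c : (Fin n → ℝ) → Bool) (j e : ℕ) : Bool :=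
  decide (e < m) && c (gridPoint n (m - 1 - e) j)

noncomputable def labelWeight (n m : ℕ) (c : (Fin n → ℝ) → Bool) (j : ℕ) : ℝ :=
  digitSum (labelDigits n m c j)

lemma extractorValue_gridPoint {n m k j : ℕ} (c : (Fin n → ℝ) → Bool) (hm : 0 < m) (hj : j < n) :
    extractorValue n m (labelWeight n m c) (gridPoint n k j) n =
      digitSum fun e => decide (k ≤ e) && labelDigits n m c j (e - k) := by
  rw [extractorValue_first _ _ hm, digitSum_shift, ← labelWeight]
  have hsum : ∑ u ∈ range n,
      labelWeight n m c u * extractorValue n m (labelWeight n m c) (gridPoint n k j) u =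
        labelWeight n m c j * 4⁻¹ ^ k := by
    rw [sum_eq_single_of_mem j (mem_range.2 hj)]
    · rw [extractorValue_of_lt _ _ hj, gridPoint, if_pos rfl]
    · intro u hu huj
      rw [extractorValue_of_lt _ _ (mem_range.1 hu), gridPoint, if_neg huj, mul_zero]
  have hnonneg : 0 ≤ labelWeight n m c j * 4⁻¹ ^ k := mul_nonneg (digitSum_nonneg _) (by positivity)
  rw [hsum, max_eq_right hnonneg, inv_pow, div_eq_mul_inv]

lemma shatters_bitExtractor {n m : ℕ} (hm : 0 < m) :
    Shatters (bitExtractor n m).funClass (gridPoints n m) := by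
  obtain ⟨k, rfl⟩ := Nat.exists_eq_add_one_of_ne_zero hm.ne'
  intro c
  refine ⟨_, ⟨fun e => extractorWeight n (k + 1) (labelWeight n (k + 1) c) e.1 e.2,
    fun v => extractorBias n (k + 1) v, rfl⟩, ?_⟩
  intro x hx
  obtain ⟨⟨i, j⟩, hij, rfl⟩ := mem_image.1 hx
  obtain ⟨hi, hj⟩ := mem_product.1 hij
  rw [mem_range] at hi hj
  rw [eval_bitExtractor_of_digitSum _ _ (extractorValue_gridPoint c hm hj)]
  simp only [labelDigits, show i ≤ k by omega, show k - i < k + 1 by omega,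
    show k + 1 - 1 - (k - i) = i by omega, decide_true, Bool.true_and]
  cases c (gridPoint n i j) <;> norm_num

/-- **Tightness of the `O(W·U)` bound (Remark 2).**  There is a universal
constant `C > 0` such that for all positive integers `m` and `n` there exists
a ReLU network architecture with at most `C·(m + n)` parameters and at most
`C·m` computation units whose function class has VC-dimension at least `m·n`,
i.e. it shatters some set of `m·n` points. -/
theorem statement17 :
    ∃ C : ℕ, 0 < C ∧
      ∀ m n : ℕ, 0 < m → 0 < n →
        ∃ N : NNArch, N.IsReLU ∧
          N.numParams ≤ C * (m + n) ∧
          N.numUnits ≤ C * m ∧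
          ∃ S : Finset (Fin N.numInputs → ℝ),
            m * n ≤ S.card ∧ Shatters N.funClass S := by
  refine ⟨16, by norm_num, fun m n hm _ => ⟨bitExtractor n m, NNArch.isReLU_ofPred, ?_, ?_,
    gridPoints n m, (card_gridPoints n m).ge, shatters_bitExtractor hm⟩⟩
  · have := numParams_bitExtractor_le n m
    omega
  · rw [NNArch.numUnits_ofPred]
    omega
end
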